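/- arXiv:1307.7993 — 3 statements merged into one kernel-verified Lean document; each statement's English description precedes it below -/
import Mathlib

section
/- Let n, p, K ≥ 1, let X^(1),…,X^(K) ∈ ℝ^{n×p}, Y^(1),…,Y^(K) ∈ ℝ^n, and λ > 0, and define the objective F(B) := (1/(2n)) Σ_{k=1}^K ‖Y^(k) − X^(k) β^(k)‖₂² + λ Σ_{j=1}^p ‖B_j‖₂ for B ∈ ℝ^{p×K}, where β^(k) is the k-th column and B_j the j-th row of B. Suppose B̂ ∈ ℝ^{p×K} is a global minimizer of F and Ẑ ∈ ℝ^{p×K} satisfies: (i) for every j ∈ {1,…,p} and k ∈ {1,…,K}, (1/n)·((X^(k))ᵀ(X^(k) β̂^(k) − Y^(k)))_j + λ Ẑ_{jk} = 0; (ii) ‖Ẑ_j‖₂ ≤ 1 for every row j; (iii) ⟨Ẑ_j, B̂_j⟩ = ‖B̂_j‖₂ for every row j. If Ω ⊆ {1,…,p} is a set of indices with ‖Ẑ_j‖₂ < 1 for all j ∈ Ω, then every global minimizer B̃ of F satisfies B̃_j = 0 for all j ∈ Ω. -/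
/-!
Two minimizers `B̂`, `B̃` have the same fitted values `X^(k) β^(k)`: the loss is strictly convex
in the fitted values and the penalty is convex, so otherwise their midpoint would do strictly
better. Hence they also have the same penalty. By stationarity each column of `λẐ` lies in the
range of `X^(k)ᵀ`, which is orthogonal to `β̃^(k) − β̂^(k)`, so
`⟨Ẑ, B̃⟩ = ⟨Ẑ, B̂⟩ = Σ_j ‖B̂_j‖ = Σ_j ‖B̃_j‖`. Every summand of `Σ_j (‖B̃_j‖ − ⟨Ẑ_j, B̃_j⟩)` is
nonnegative by Cauchy–Schwarz and `‖Ẑ_j‖ ≤ 1`, so all vanish, and when `‖Ẑ_j‖ < 1` this forces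
`B̃_j = 0`.
-/

open Matrix Finset

/-- The `l1/l2`-regularized multi-task Lasso objective
`F(B) = (1/(2n)) Σ_k ‖Y^(k) − X^(k) β^(k)‖₂² + λ Σ_j ‖B_j‖₂`. -/
noncomputable def lassoObj {n p K : ℕ} (X : Fin K → Matrix (Fin n) (Fin p) ℝ)
    (Y : Fin K → Fin n → ℝ) (lam : ℝ) (B : Matrix (Fin p) (Fin K) ℝ) : ℝ :=
  (1 / (2 * (n : ℝ))) *
      ∑ k, ∑ i, (Y k i - ((X k) *ᵥ fun j => B j k) i) ^ 2 +
    lam * ∑ j, Real.sqrt (∑ k, (B j k) ^ 2)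

section Rows

variable {κ : Type*} [Fintype κ]

lemma sqrt_sum_sq_eq_norm_toLp (v : κ → ℝ) : √(∑ k, v k ^ 2) = ‖WithLp.toLp 2 v‖ := by
  simp [EuclideanSpace.norm_eq]

lemma sqrt_sum_sq_half_add_le (u v : κ → ℝ) :
    √(∑ k, ((u k + v k) / 2) ^ 2) ≤ (√(∑ k, u k ^ 2) + √(∑ k, v k ^ 2)) / 2 := by
  have h : (fun k => (u k + v k) / 2) = (2⁻¹ : ℝ) • (u + v) := by
    ext k; simp only [Pi.smul_apply, Pi.add_apply, smul_eq_mul]; ring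
  simp only [sqrt_sum_sq_eq_norm_toLp, h, WithLp.toLp_smul, WithLp.toLp_add, norm_smul]
  rw [Real.norm_of_nonneg (by norm_num), inv_mul_eq_div]
  gcongr
  exact norm_add_le _ _

lemma sum_mul_le_sqrt_sum_sq {z : κ → ℝ} (hz : √(∑ k, z k ^ 2) ≤ 1) (b : κ → ℝ) :
    ∑ k, z k * b k ≤ √(∑ k, b k ^ 2) :=
  (Real.sum_mul_le_sqrt_mul_sqrt _ z b).trans
    (mul_le_of_le_one_left (Real.sqrt_nonneg _) hz)

lemma eq_zero_of_sum_mul_eq_sqrt_sum_sq {z b : κ → ℝ} (hz : √(∑ k, z k ^ 2) < 1)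
    (h : ∑ k, z k * b k = √(∑ k, b k ^ 2)) : b = 0 := by
  have hcs := Real.sum_mul_le_sqrt_mul_sqrt univ z b
  rw [h] at hcs
  have hb : √(∑ k, b k ^ 2) = 0 := by
    nlinarith [Real.sqrt_nonneg (∑ k, b k ^ 2)]
  rwa [sqrt_sum_sq_eq_norm_toLp, norm_eq_zero, WithLp.toLp_eq_zero] at hb

end Rows

lemma sum_mul_eq_sqrt_sum_sq_of_sum_eq {ι κ : Type*} [Fintype ι] [Fintype κ] {Z C : ι → κ → ℝ}
    (hZ : ∀ j, √(∑ k, Z j k ^ 2) ≤ 1)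
    (h : ∑ j, ∑ k, Z j k * C j k = ∑ j, √(∑ k, C j k ^ 2)) (j : ι) :
    ∑ k, Z j k * C j k = √(∑ k, C j k ^ 2) :=
  (sum_eq_sum_iff_of_le fun j _ => sum_mul_le_sqrt_sum_sq (hZ j) (C j)).1 h j (mem_univ j)

lemma transpose_mulVec_dotProduct_eq_zero {R m q : Type*} [CommSemiring R] [Fintype m]
    [Fintype q] (A : Matrix m q R) (r : m → R) {d : q → R} (hd : A *ᵥ d = 0) :
    (Aᵀ *ᵥ r) ⬝ᵥ d = 0 := by
  rw [mulVec_transpose, ← dotProduct_mulVec, hd, dotProduct_zero]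

section Lasso

variable {n p K : ℕ} (X : Fin K → Matrix (Fin n) (Fin p) ℝ) (Y : Fin K → Fin n → ℝ) {lam : ℝ}

lemma lassoObj_half_add_le (hlam : 0 ≤ lam) (B C : Matrix (Fin p) (Fin K) ℝ) :
    lassoObj X Y lam (fun j k => (B j k + C j k) / 2) ≤
      (lassoObj X Y lam B + lassoObj X Y lam C) / 2 -
        1 / (8 * n) * ∑ k, ∑ i, ((X k *ᵥ fun j => B j k) i - (X k *ᵥ fun j => C j k) i) ^ 2 := by
  have hfit : ∀ k, (X k *ᵥ fun j => (B j k + C j k) / 2) =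
      (2⁻¹ : ℝ) • ((X k *ᵥ fun j => B j k) + X k *ᵥ fun j => C j k) := by
    intro k
    rw [← mulVec_add, ← mulVec_smul]
    congr 1
    ext j
    simp only [Pi.smul_apply, Pi.add_apply, smul_eq_mul]
    ring
  have hpen : ∑ j, √(∑ k, ((B j k + C j k) / 2) ^ 2) ≤
      (∑ j, √(∑ k, B j k ^ 2) + ∑ j, √(∑ k, C j k ^ 2)) / 2 := by
    rw [← sum_add_distrib, sum_div]
    exact sum_le_sum fun j _ => sqrt_sum_sq_half_add_le (B j) (C j)
  have hloss : ∑ k, ∑ i, (Y k i - (X k *ᵥ fun j => (B j k + C j k) / 2) i) ^ 2 =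
      (∑ k, ∑ i, (Y k i - (X k *ᵥ fun j => B j k) i) ^ 2 +
          ∑ k, ∑ i, (Y k i - (X k *ᵥ fun j => C j k) i) ^ 2) / 2 -
        1 / 4 * ∑ k, ∑ i, ((X k *ᵥ fun j => B j k) i - (X k *ᵥ fun j => C j k) i) ^ 2 := by
    simp only [hfit, Pi.smul_apply, Pi.add_apply, smul_eq_mul, mul_sum, ← sum_add_distrib,
      sum_div, ← sum_sub_distrib]
    congr! 2
    ring
  unfold lassoObj
  rw [hloss]
  linear_combination mul_le_mul_of_nonneg_left hpen hlam

lemma mulVec_eq_of_forall_lassoObj_le (hn : 0 < n) (hlam : 0 ≤ lam) {B C : Matrix (Fin p) (Fin K) ℝ}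
    (hB : ∀ D, lassoObj X Y lam B ≤ lassoObj X Y lam D)
    (hC : ∀ D, lassoObj X Y lam C ≤ lassoObj X Y lam D) (k : Fin K) :
    (X k *ᵥ fun j => B j k) = X k *ᵥ fun j => C j k := by
  have hQ : ∑ k, ∑ i, ((X k *ᵥ fun j => B j k) i - (X k *ᵥ fun j => C j k) i) ^ 2 ≤ 0 := by
    refine nonpos_of_mul_nonpos_right ?_ (by positivity : (0 : ℝ) < 1 / (8 * n))
    linarith [lassoObj_half_add_le X Y hlam B C, hB (fun j k => (B j k + C j k) / 2), hC B]
  have hQ0 := le_antisymm hQ (by positivity)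
  have hk := (sum_eq_zero_iff_of_nonneg fun k _ => by positivity).1 hQ0 k (mem_univ k)
  ext i
  have hi := (sum_eq_zero_iff_of_nonneg fun i _ => by positivity).1 hk i (mem_univ i)
  exact sub_eq_zero.1 (pow_eq_zero_iff two_ne_zero |>.1 hi)

lemma sum_sqrt_eq_of_lassoObj_eq (hlam : lam ≠ 0) {B C : Matrix (Fin p) (Fin K) ℝ}
    (hfit : ∀ k, (X k *ᵥ fun j => B j k) = X k *ᵥ fun j => C j k)
    (h : lassoObj X Y lam B = lassoObj X Y lam C) :
    ∑ j, √(∑ k, B j k ^ 2) = ∑ j, √(∑ k, C j k ^ 2) := by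
  unfold lassoObj at h
  simp only [hfit] at h
  exact mul_left_cancel₀ hlam (by linarith)

lemma sum_sum_mul_sub_eq_zero_of_stationary (hlam : lam ≠ 0) {B C Z : Matrix (Fin p) (Fin K) ℝ}
    (hstat : ∀ j k, (1 / (n : ℝ)) * (((X k)ᵀ *ᵥ ((X k *ᵥ fun j' => B j' k) - Y k)) j) +
        lam * Z j k = 0)
    (hfit : ∀ k, (X k *ᵥ fun j => B j k) = X k *ᵥ fun j => C j k) :
    ∑ j, ∑ k, Z j k * (C j k - B j k) = 0 := by
  rw [sum_comm]
  refine sum_eq_zero fun k _ => (mul_eq_zero.mp ?_).resolve_left hlam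
  have hker : X k *ᵥ ((fun j => C j k) - fun j => B j k) = 0 := by
    rw [mulVec_sub, hfit, sub_self]
  calc lam * ∑ j, Z j k * (C j k - B j k)
      = ∑ j, -(1 / (n : ℝ)) * (((X k)ᵀ *ᵥ ((X k *ᵥ fun j' => B j' k) - Y k)) j *
          (C j k - B j k)) := by
        rw [mul_sum]
        exact sum_congr rfl fun j _ => by linear_combination (C j k - B j k) * hstat j k
    _ = -(1 / (n : ℝ)) * (((X k)ᵀ *ᵥ ((X k *ᵥ fun j' => B j' k) - Y k)) ⬝ᵥ
          ((fun j => C j k) - fun j => B j k)) := by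
        rw [← mul_sum]; rfl
    _ = 0 := by rw [transpose_mulVec_dotProduct_eq_zero _ _ hker, mul_zero]

end Lasso

theorem stmt4_general {n p K : ℕ} (hn : 0 < n)
    (X : Fin K → Matrix (Fin n) (Fin p) ℝ) (Y : Fin K → Fin n → ℝ)
    (lam : ℝ) (hlam : 0 < lam)
    (Bh Zh : Matrix (Fin p) (Fin K) ℝ)
    (hBh : ∀ B, lassoObj X Y lam Bh ≤ lassoObj X Y lam B)
    (hstat : ∀ j k,
      (1 / (n : ℝ)) * (((X k)ᵀ *ᵥ (((X k) *ᵥ fun j' => Bh j' k) - Y k)) j) +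
        lam * Zh j k = 0)
    (hdualfeas : ∀ j, Real.sqrt (∑ k, (Zh j k) ^ 2) ≤ 1)
    (halign : ∀ j, (∑ k, Zh j k * Bh j k) = Real.sqrt (∑ k, (Bh j k) ^ 2))
    (Ω : Set (Fin p)) (hΩ : ∀ j ∈ Ω, Real.sqrt (∑ k, (Zh j k) ^ 2) < 1) :
    ∀ Bt : Matrix (Fin p) (Fin K) ℝ,
      (∀ B, lassoObj X Y lam Bt ≤ lassoObj X Y lam B) →
      ∀ j ∈ Ω, Bt j = 0 := by
  intro Bt hBt j hj
  have hfit := mulVec_eq_of_forall_lassoObj_le X Y hn hlam.le hBh hBt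
  have hpen := sum_sqrt_eq_of_lassoObj_eq X Y hlam.ne' hfit (le_antisymm (hBh Bt) (hBt Bh))
  have horth := sum_sum_mul_sub_eq_zero_of_stationary X Y hlam.ne' hstat hfit
  have hsum : ∑ j, ∑ k, Zh j k * Bt j k = ∑ j, √(∑ k, Bt j k ^ 2) := by
    simp only [mul_sub, sum_sub_distrib, sub_eq_zero] at horth
    rw [horth, ← hpen]
    exact sum_congr rfl fun j _ => halign j
  exact eq_zero_of_sum_mul_eq_sqrt_sum_sq (hΩ j hj)
    (sum_mul_eq_sqrt_sum_sq_of_sum_eq hdualfeas hsum j)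

theorem stmt4 {n p K : ℕ} (hn : 0 < n) (hp : 0 < p) (hK : 0 < K)
    (X : Fin K → Matrix (Fin n) (Fin p) ℝ) (Y : Fin K → Fin n → ℝ)
    (lam : ℝ) (hlam : 0 < lam)
    (Bh Zh : Matrix (Fin p) (Fin K) ℝ)
    (hBh : ∀ B, lassoObj X Y lam Bh ≤ lassoObj X Y lam B)
    (hstat : ∀ j k,
      (1 / (n : ℝ)) * (((X k)ᵀ *ᵥ (((X k) *ᵥ fun j' => Bh j' k) - Y k)) j) +
        lam * Zh j k = 0)
    (hdualfeas : ∀ j, Real.sqrt (∑ k, (Zh j k) ^ 2) ≤ 1)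
    (halign : ∀ j, (∑ k, Zh j k * Bh j k) = Real.sqrt (∑ k, (Bh j k) ^ 2))
    (Ω : Set (Fin p)) (hΩ : ∀ j ∈ Ω, Real.sqrt (∑ k, (Zh j k) ^ 2) < 1) :
    ∀ Bt : Matrix (Fin p) (Fin K) ℝ,
      (∀ B, lassoObj X Y lam Bt ≤ lassoObj X Y lam B) →
      ∀ j ∈ Ω, Bt j = 0 :=
  stmt4_general hn X Y lam hlam Bh Zh hBh hstat hdualfeas halign Ω hΩ
end

section
/- Let d ≥ 1 and let ξ₁,…,ξ_d be independent standard Gaussian random variables (i.e., the coordinate functions on (Fin d → ℝ) equipped with the d-fold product of the standard Gaussian measure N(0,1)). Then for every real t > d, P( Σ_{i=1}^d ξ_i² ≥ 2t ) ≤ exp( −t(1 − 2√(d/t)) ). -/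
/-!
Chernoff's bound at `λ = (1 - s) / 2` with `s = √(d / t)`: the moment generating function of
`∑ ξᵢ²` is `E exp (λ ∑ ξᵢ²) = (1 - 2λ) ^ (-d / 2) = s ^ (-d / 2)`, a product of one-dimensional
Gaussian integrals. Since `x ≤ exp (x ^ 2 / 2)`, `s ^ (-d / 2) ≤ exp (d / (2 s)) = exp (t s / 2)`
because `d = t s ^ 2`, and `exp (-(1 - s) t + t s / 2) ≤ exp (-t (1 - 2 s))`.
-/

open MeasureTheory ProbabilityTheory Real

-- For `l ≥ 1 / 2` both sides are junk `0`: the integrand is not integrable and `√` vanishes on `(-∞, 0]`.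
lemma integral_exp_mul_sq_gaussianReal (l : ℝ) :
    ∫ x, exp (l * x ^ 2) ∂gaussianReal 0 1 = (√(1 - 2 * l))⁻¹ := by
  have hpdf : ∀ x, gaussianPDFReal 0 1 x • exp (l * x ^ 2)
      = (√(2 * π))⁻¹ * exp (-((1 - 2 * l) / 2) * x ^ 2) := by
    intro x
    simp only [gaussianPDFReal, NNReal.coe_one, mul_one, sub_zero, smul_eq_mul, mul_assoc,
      ← exp_add]
    ring_nf
  rw [integral_gaussianReal_eq_integral_smul one_ne_zero]
  simp_rw [hpdf]
  rw [integral_const_mul, integral_gaussian, div_div_eq_mul_div, div_eq_mul_inv,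
    mul_comm π, sqrt_mul (by positivity : (0 : ℝ) ≤ 2 * π), ← mul_assoc,
    inv_mul_cancel₀ (sqrt_pos.2 (by positivity)).ne', one_mul, sqrt_inv]

lemma integrable_exp_mul_sq_gaussianReal {l : ℝ} (hl : l < 1 / 2) :
    Integrable (fun x => exp (l * x ^ 2)) (gaussianReal 0 1) :=
  .of_integral_ne_zero <| by
    rw [integral_exp_mul_sq_gaussianReal]
    exact (inv_pos.2 (sqrt_pos.2 (by linarith))).ne'

lemma integral_exp_mul_sum_sq_pi_gaussianReal (ι : Type*) [Fintype ι] (l : ℝ) :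
    ∫ ξ : ι → ℝ, exp (l * ∑ i, ξ i ^ 2) ∂Measure.pi (fun _ => gaussianReal 0 1)
      = (√(1 - 2 * l))⁻¹ ^ Fintype.card ι := by
  simp_rw [Finset.mul_sum, exp_sum]
  rw [integral_fintype_prod_eq_pow (fun x => exp (l * x ^ 2)),
    integral_exp_mul_sq_gaussianReal]

lemma integrable_exp_mul_sum_sq_pi_gaussianReal (ι : Type*) [Fintype ι] {l : ℝ}
    (hl : l < 1 / 2) :
    Integrable (fun ξ : ι → ℝ => exp (l * ∑ i, ξ i ^ 2))
      (Measure.pi fun _ => gaussianReal 0 1) := by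
  simp_rw [Finset.mul_sum, exp_sum]
  exact Integrable.fintype_prod fun _ => integrable_exp_mul_sq_gaussianReal hl

lemma le_exp_sq_div_two (x : ℝ) : x ≤ exp (x ^ 2 / 2) := by
  nlinarith [add_one_le_exp (x ^ 2 / 2), sq_nonneg (x - 1)]

lemma inv_sqrt_pow_le_exp {s : ℝ} (hs : 0 < s) (n : ℕ) :
    (√s)⁻¹ ^ n ≤ exp (n / (2 * s)) := by
  calc (√s)⁻¹ ^ n ≤ exp (((√s)⁻¹) ^ 2 / 2) ^ n :=
        pow_le_pow_left₀ (by positivity) (le_exp_sq_div_two _) n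
    _ = exp (n / (2 * s)) := by
        rw [← exp_nat_mul, inv_pow, sq_sqrt hs.le]
        congr 1
        field_simp

theorem stmt6 (d : ℕ) (hd : 0 < d) (t : ℝ) (ht : (d : ℝ) < t) :
    (Measure.pi fun _ : Fin d => gaussianReal 0 1)
        {ξ : Fin d → ℝ | 2 * t ≤ ∑ i, (ξ i) ^ 2} ≤
      ENNReal.ofReal (Real.exp (-t * (1 - 2 * Real.sqrt ((d : ℝ) / t)))) := by
  have ht0 : 0 < t := (Nat.cast_nonneg d).trans_lt ht
  set s := √((d : ℝ) / t)
  have hs0 : 0 < s := sqrt_pos.2 (div_pos (Nat.cast_pos.2 hd) ht0)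
  have hs1 : s < 1 := (sqrt_lt' one_pos).2 (by rw [one_pow, div_lt_one ht0]; exact ht)
  have hds : (d : ℝ) / (2 * s) = t * s / 2 := by
    have hd_eq : (d : ℝ) = t * s ^ 2 := by rw [sq_sqrt (by positivity)]; field_simp
    rw [hd_eq]; field_simp
  have chernoff := measure_ge_le_exp_mul_mgf (2 * t) (by linarith : 0 ≤ (1 - s) / 2)
    (integrable_exp_mul_sum_sq_pi_gaussianReal (Fin d) (by linarith : (1 - s) / 2 < 1 / 2))
  rw [mgf, integral_exp_mul_sum_sq_pi_gaussianReal, Fintype.card_fin,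
    show 1 - 2 * ((1 - s) / 2) = s by ring] at chernoff
  rw [← ofReal_measureReal]
  refine ENNReal.ofReal_le_ofReal (chernoff.trans ?_)
  calc exp (-((1 - s) / 2) * (2 * t)) * (√s)⁻¹ ^ d
      ≤ exp (-((1 - s) / 2) * (2 * t)) * exp (d / (2 * s)) := by
        gcongr; exact inv_sqrt_pow_le_exp hs0 d
    _ ≤ exp (-t * (1 - 2 * s)) := by
        rw [← exp_add, exp_le_exp, hds]; nlinarith
end

section
/- Let n, s, m ≥ 1, λ ≠ 0, X_S ∈ ℝ^{n×s}, X_{S^c} ∈ ℝ^{n×m}, and W ∈ ℝ^n. Suppose Σ̂ := (1/n) X_Sᵀ X_S is invertible and set Π := (1/n) X_S Σ̂^{-1} X_Sᵀ. Suppose β̂, β* ∈ ℝ^s, ẑ_S ∈ ℝ^s, and ẑ_{S^c} ∈ ℝ^m satisfy the two equations Σ̂(β̂ − β*) − (1/n) X_Sᵀ W = −λ ẑ_S and (1/n) X_{S^c}ᵀ X_S (β̂ − β*) − (1/n) X_{S^c}ᵀ W = −λ ẑ_{S^c}. Then ẑ_{S^c} = −(1/(λn)) X_{S^c}ᵀ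 (Π − I_n) W + (1/n) X_{S^c}ᵀ X_S Σ̂^{-1} ẑ_S. -/
/-!
Solve the `S`-block equation for `β̂ - β* = Σ̂⁻¹ ((1/n) X_Sᵀ W - λ ẑ_S)` and substitute it into the
`S^c`-block equation; the terms in `W` combine into `X_{S^c}ᵀ (Π - I) W`.
-/

open Matrix

section

variable {K ι σ μ : Type*} [Field K] [Fintype ι] [Fintype σ] [DecidableEq σ] [DecidableEq ι]

theorem Matrix.eq_nonsing_inv_mulVec_of_mulVec_eq {A : Matrix σ σ K} (hA : IsUnit A.det)
    {x y : σ → K} (h : A *ᵥ x = y) : x = A⁻¹ *ᵥ y := by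
  rw [← h, mulVec_mulVec, nonsing_inv_mul A hA, one_mulVec]

theorem dual_eq_of_stationarity (c lam : K) (hlam : lam ≠ 0)
    (XS : Matrix ι σ K) (Xc : Matrix ι μ K) (W : ι → K) (Sig : Matrix σ σ K)
    (hInv : IsUnit Sig.det) (d zS : σ → K) (zc : μ → K)
    (h1 : Sig *ᵥ d - c • (XSᵀ *ᵥ W) = -(lam • zS))
    (h2 : c • ((Xcᵀ * XS) *ᵥ d) - c • (Xcᵀ *ᵥ W) = -(lam • zc)) :
    zc = (-(c / lam)) • (Xcᵀ *ᵥ ((c • (XS * Sig⁻¹ * XSᵀ) - 1) *ᵥ W)) +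
      c • ((Xcᵀ * XS * Sig⁻¹) *ᵥ zS) := by
  have hd : d = Sig⁻¹ *ᵥ (c • (XSᵀ *ᵥ W) - lam • zS) :=
    eq_nonsing_inv_mulVec_of_mulVec_eq hInv (by linear_combination (norm := module) h1)
  have hXd : (Xcᵀ * XS) *ᵥ d =
      c • ((Xcᵀ * XS * Sig⁻¹ * XSᵀ) *ᵥ W) - lam • ((Xcᵀ * XS * Sig⁻¹) *ᵥ zS) := by
    simp only [hd, mulVec_sub, mulVec_smul, mulVec_mulVec, Matrix.mul_assoc]
  have hproj : Xcᵀ *ᵥ ((c • (XS * Sig⁻¹ * XSᵀ) - 1) *ᵥ W) =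
      c • ((Xcᵀ * XS * Sig⁻¹ * XSᵀ) *ᵥ W) - Xcᵀ *ᵥ W := by
    simp only [sub_mulVec, one_mulVec, mulVec_sub, smul_mulVec, mulVec_smul, mulVec_mulVec,
      Matrix.mul_assoc]
  have hzc : lam • zc = c • (Xcᵀ *ᵥ W) - c • ((Xcᵀ * XS) *ᵥ d) := by
    linear_combination (norm := module) h2
  refine smul_right_injective _ hlam ?_
  dsimp only
  rw [hzc, hXd, hproj]
  match_scalars <;> field_simp

end

theorem stmt9_general {n s m : ℕ}
    (lam : ℝ) (hlam : lam ≠ 0)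
    (XS : Matrix (Fin n) (Fin s) ℝ) (Xc : Matrix (Fin n) (Fin m) ℝ)
    (W : Fin n → ℝ)
    (Sig : Matrix (Fin s) (Fin s) ℝ)
    (hInv : IsUnit Sig.det)
    (Pi : Matrix (Fin n) (Fin n) ℝ)
    (hPi : Pi = (1 / (n : ℝ)) • (XS * Sig⁻¹ * XSᵀ))
    (bh bs zS : Fin s → ℝ) (zc : Fin m → ℝ)
    (h1 : Sig *ᵥ (bh - bs) - (1 / (n : ℝ)) • (XSᵀ *ᵥ W) = -(lam • zS))
    (h2 : (1 / (n : ℝ)) • ((Xcᵀ * XS) *ᵥ (bh - bs)) - (1 / (n : ℝ)) • (Xcᵀ *ᵥ W) =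
      -(lam • zc)) :
    zc = (-(1 / (lam * n))) • (Xcᵀ *ᵥ ((Pi - 1) *ᵥ W)) +
        (1 / (n : ℝ)) • ((Xcᵀ * XS * Sig⁻¹) *ᵥ zS) := by
  have hscal : 1 / (lam * n) = (1 / (n : ℝ)) / lam := by ring
  rw [hPi, hscal]
  exact dual_eq_of_stationarity _ lam hlam XS Xc W Sig hInv (bh - bs) zS zc h1 h2

theorem stmt9 {n s m : ℕ} (hn : 0 < n) (hs : 0 < s) (hm : 0 < m)
    (lam : ℝ) (hlam : lam ≠ 0)
    (XS : Matrix (Fin n) (Fin s) ℝ) (Xc : Matrix (Fin n) (Fin m) ℝ)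
    (W : Fin n → ℝ)
    (Sig : Matrix (Fin s) (Fin s) ℝ)
    (hSig : Sig = (1 / (n : ℝ)) • (XSᵀ * XS))
    (hInv : IsUnit Sig.det)
    (Pi : Matrix (Fin n) (Fin n) ℝ)
    (hPi : Pi = (1 / (n : ℝ)) • (XS * Sig⁻¹ * XSᵀ))
    (bh bs zS : Fin s → ℝ) (zc : Fin m → ℝ)
    (h1 : Sig *ᵥ (bh - bs) - (1 / (n : ℝ)) • (XSᵀ *ᵥ W) = -(lam • zS))
    (h2 : (1 / (n : ℝ)) • ((Xcᵀ * XS) *ᵥ (bh - bs)) - (1 / (n : ℝ)) • (Xcᵀ *ᵥ W) =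
      -(lam • zc)) :
    zc = (-(1 / (lam * n))) • (Xcᵀ *ᵥ ((Pi - 1) *ᵥ W)) +
        (1 / (n : ℝ)) • ((Xcᵀ * XS * Sig⁻¹) *ᵥ zS) :=
  stmt9_general lam hlam XS Xc W Sig hInv Pi hPi bh bs zS zc h1 h2
end
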